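/- Let α, V, μ, γ, β > 0 and let (M*, C*) with M* > 0, C* > 0 satisfy α·V·C*² = μ·M* and γ = β·C* + V·C*·M*. Let M, C : [0,∞) → ℝ be differentiable with M'(t) = α·V·C(t)² − μ·M(t), C'(t) = γ − β·C(t) − V·C(t)·M(t), and M(t) ≥ 0 for all t ≥ 0. Then L(t) := (M(t) − M*)² + 2α·(C(t) − C*)² satisfies L'(t) ≤ −2·min(μ, β)·L(t) for all t ≥ 0, and consequently L(t) ≤ L(0)·e^{−2·min(μ,β)·t} for all t ≥ 0; in particular M(t) → M* and C(t) → C* as t → ∞. -/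

import Mathlib

/-!
Along a trajectory, `L' = -2μ (M - M*)² - 4αβ (C - C*)² - 2αV (M + M*) (C - C*)²`, once the
equilibrium relations are used to eliminate `γ` and `μ M*`. Since `M ≥ 0`, the last term is
nonpositive and the first two are at most `-2 min(μ, β) L`. Grönwall's inequality then gives the
exponential bound, and `L → 0` forces `M → M*` and `C → C*`.
-/

open Filter Real Topology Set

theorem le_mul_exp_of_hasDerivAt_le_mul {f f' : ℝ → ℝ} {K a : ℝ}
    (hf : ∀ t, a ≤ t → HasDerivAt f (f' t) t) (bound : ∀ t, a ≤ t → f' t ≤ K * f t)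
    {t : ℝ} (ht : a ≤ t) : f t ≤ f a * exp (K * (t - a)) := by
  have hcont : ContinuousOn f (Icc a t) := fun s hs => (hf s hs.1).continuousAt.continuousWithinAt
  have := le_gronwallBound_of_liminf_deriv_right_le (ε := 0) hcont
    (fun s hs _ hr => (hf s hs.1).hasDerivWithinAt.liminf_right_slope_le hr) le_rfl
    (fun s hs => by simpa using bound s hs.1) t ⟨ht, le_rfl⟩
  rwa [gronwallBound_ε0] at this

theorem tendsto_of_sq_sub_le {ι : Type*} {l : Filter ι} {f g : ι → ℝ} {a : ℝ}
    (hg : Tendsto g l (𝓝 0)) (hfg : ∀ᶠ i in l, (f i - a) ^ 2 ≤ g i) : Tendsto f l (𝓝 a) := by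
  rw [tendsto_iff_dist_tendsto_zero]
  refine squeeze_zero' (.of_forall fun _ => dist_nonneg) ?_ (by simpa using hg.sqrt)
  filter_upwards [hfg] with i hi
  rw [Real.dist_eq, ← Real.sqrt_sq_eq_abs]
  exact Real.sqrt_le_sqrt hi

theorem tendsto_zero_of_le_mul_exp {g : ℝ → ℝ} {c K : ℝ} (hK : K < 0) (hg : ∀ t, 0 ≤ g t)
    (hle : ∀ t, 0 ≤ t → g t ≤ c * exp (K * t)) : Tendsto g atTop (𝓝 0) := by
  have hexp : Tendsto (fun t => c * exp (K * t)) atTop (𝓝 0) := by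
    simpa using (tendsto_exp_atBot.comp (tendsto_id.const_mul_atTop_of_neg hK)).const_mul c
  exact squeeze_zero' (.of_forall hg) (eventually_ge_atTop 0 |>.mono hle) hexp

section Lyapunov

variable {α V μ γ β Mstar Cstar : ℝ}

theorem hasDerivAt_lyapunov {M C : ℝ → ℝ} {m' c' t : ℝ}
    (hM : HasDerivAt M m' t) (hC : HasDerivAt C c' t) :
    HasDerivAt (fun s => (M s - Mstar) ^ 2 + 2 * α * (C s - Cstar) ^ 2)
      (2 * (M t - Mstar) * m' + 2 * α * (2 * (C t - Cstar) * c')) t := by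
  refine (((hM.sub_const Mstar).fun_pow 2).fun_add
    (((hC.sub_const Cstar).fun_pow 2).const_mul (2 * α))).congr_deriv ?_
  norm_num

theorem lyapunov_dissipation_eq (heq1 : α * V * Cstar ^ 2 = μ * Mstar)
    (heq2 : γ = β * Cstar + V * Cstar * Mstar) (m c : ℝ) :
    2 * (m - Mstar) * (α * V * c ^ 2 - μ * m) + 2 * α * (2 * (c - Cstar) * (γ - β * c - V * c * m))
      = -2 * μ * (m - Mstar) ^ 2 - 4 * α * β * (c - Cstar) ^ 2
        - 2 * α * V * (m + Mstar) * (c - Cstar) ^ 2 := by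
  linear_combination (2 * (m - Mstar)) * heq1 + (4 * α * (c - Cstar)) * heq2

theorem lyapunov_dissipation_le (hα : 0 ≤ α) (hV : 0 ≤ V) (hMstar : 0 ≤ Mstar)
    (heq1 : α * V * Cstar ^ 2 = μ * Mstar) (heq2 : γ = β * Cstar + V * Cstar * Mstar)
    {m : ℝ} (hm : 0 ≤ m) (c : ℝ) :
    2 * (m - Mstar) * (α * V * c ^ 2 - μ * m) + 2 * α * (2 * (c - Cstar) * (γ - β * c - V * c * m))
      ≤ -2 * min μ β * ((m - Mstar) ^ 2 + 2 * α * (c - Cstar) ^ 2) := by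
  rw [lyapunov_dissipation_eq heq1 heq2]
  have hμ : min μ β * (m - Mstar) ^ 2 ≤ μ * (m - Mstar) ^ 2 :=
    mul_le_mul_of_nonneg_right (min_le_left μ β) (sq_nonneg _)
  have hβ : min μ β * (α * (c - Cstar) ^ 2) ≤ β * (α * (c - Cstar) ^ 2) :=
    mul_le_mul_of_nonneg_right (min_le_right μ β) (by positivity)
  have hcross : 0 ≤ α * V * (m + Mstar) * (c - Cstar) ^ 2 := by positivity
  nlinarith

end Lyapunov

theorem stmt10_general (α V μ γ β Mstar Cstar : ℝ)
    (hα : 0 < α) (hV : 0 < V) (hμ : 0 < μ) (hβ : 0 < β)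
    (hMstar : 0 < Mstar)
    (heq1 : α * V * Cstar ^ 2 = μ * Mstar)
    (heq2 : γ = β * Cstar + V * Cstar * Mstar)
    (M C : ℝ → ℝ)
    (hM : ∀ t, 0 ≤ t → HasDerivAt M (α * V * C t ^ 2 - μ * M t) t)
    (hC : ∀ t, 0 ≤ t → HasDerivAt C (γ - β * C t - V * C t * M t) t)
    (hMnn : ∀ t, 0 ≤ t → 0 ≤ M t)
    (L : ℝ → ℝ)
    (hL : ∀ t, L t = (M t - Mstar) ^ 2 + 2 * α * (C t - Cstar) ^ 2) :
    (∀ t, 0 ≤ t → deriv L t ≤ -2 * min μ β * L t) ∧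
    (∀ t, 0 ≤ t → L t ≤ L 0 * Real.exp (-2 * min μ β * t)) ∧
    Tendsto M atTop (nhds Mstar) ∧ Tendsto C atTop (nhds Cstar) := by
  set L' := fun t => 2 * (M t - Mstar) * (α * V * C t ^ 2 - μ * M t)
    + 2 * α * (2 * (C t - Cstar) * (γ - β * C t - V * C t * M t))
  have hLderiv : ∀ t, 0 ≤ t → HasDerivAt L (L' t) t := fun t ht => by
    rw [funext hL]; exact hasDerivAt_lyapunov (hM t ht) (hC t ht)
  have hdiss : ∀ t, 0 ≤ t → L' t ≤ -2 * min μ β * L t := fun t ht => by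
    rw [hL t]; exact lyapunov_dissipation_le hα.le hV.le hMstar.le heq1 heq2 (hMnn t ht) (C t)
  have hdecay : ∀ t, 0 ≤ t → L t ≤ L 0 * exp (-2 * min μ β * t) := fun t ht => by
    simpa using le_mul_exp_of_hasDerivAt_le_mul hLderiv hdiss ht
  have hLlim : Tendsto L atTop (𝓝 0) :=
    tendsto_zero_of_le_mul_exp (by nlinarith [lt_min hμ hβ]) (fun t => by rw [hL]; positivity)
      hdecay
  refine ⟨fun t ht => (hLderiv t ht).deriv ▸ hdiss t ht, hdecay, ?_, ?_⟩
  · refine tendsto_of_sq_sub_le hLlim (.of_forall fun t => ?_)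
    rw [hL]; nlinarith [sq_nonneg (C t - Cstar)]
  · refine tendsto_of_sq_sub_le (by simpa using hLlim.div_const (2 * α)) (.of_forall fun t => ?_)
    rw [hL, le_div_iff₀ (by positivity)]; nlinarith [sq_nonneg (M t - Mstar)]

/-- Exponential decay of the Lyapunov function: along solutions of `M' = α V C² − μ M`,
`C' = γ − β C − V C M` with `M ≥ 0`, `L(t) = (M(t) − M*)² + 2α(C(t) − C*)²` satisfies
`L' ≤ −2 min(μ,β) L`, hence `L(t) ≤ L(0) e^{−2 min(μ,β) t}`, and `M(t) → M*`, `C(t) → C*`. -/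
theorem stmt10 (α V μ γ β Mstar Cstar : ℝ)
    (hα : 0 < α) (hV : 0 < V) (hμ : 0 < μ) (hγ : 0 < γ) (hβ : 0 < β)
    (hMstar : 0 < Mstar) (hCstar : 0 < Cstar)
    (heq1 : α * V * Cstar ^ 2 = μ * Mstar)
    (heq2 : γ = β * Cstar + V * Cstar * Mstar)
    (M C : ℝ → ℝ)
    (hM : ∀ t, 0 ≤ t → HasDerivAt M (α * V * C t ^ 2 - μ * M t) t)
    (hC : ∀ t, 0 ≤ t → HasDerivAt C (γ - β * C t - V * C t * M t) t)
    (hMnn : ∀ t, 0 ≤ t → 0 ≤ M t)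
    (L : ℝ → ℝ)
    (hL : ∀ t, L t = (M t - Mstar) ^ 2 + 2 * α * (C t - Cstar) ^ 2) :
    (∀ t, 0 ≤ t → deriv L t ≤ -2 * min μ β * L t) ∧
    (∀ t, 0 ≤ t → L t ≤ L 0 * Real.exp (-2 * min μ β * t)) ∧
    Tendsto M atTop (nhds Mstar) ∧ Tendsto C atTop (nhds Cstar) :=
  stmt10_general α V μ γ β Mstar Cstar hα hV hμ hβ hMstar heq1 heq2 M C hM hC hMnn L hL
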